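/- If a hyperplane arrangement A of n hyperplanes in R^m separates a packing of unit balls (any two balls in the packing are separated by at least one hyperplane of A), then the number of balls in the packing is at most the number of regions of A, and hence at most ∑_{i=0}^{m} C(n,i). -/

import Mathlib

/-!
Pick in every ball a point off all hyperplanes (the complement of the arrangement is dense).
A separating hyperplane puts two such points on opposite sides, so their sign vectors differ.
The connected components of the complement are exactly its nonempty sign cells: a cell is convex,
and by the intermediate value theorem the sign vector is constant on a preconnected set avoiding
the hyperplanes. So both counts are at least `N`, and it remains to bound the number of sign
vectors realised on an affine subspace of dimension `d` by `∑_{i ≤ d} C(n, i)`, by induction on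
`n`. Forgetting the last hyperplane identifies the vectors `snoc r true` and `snoc r false`; when
both are realised, a segment joining them crosses the last hyperplane inside the cell of `r`, so
such `r` are realised on that hyperplane, of dimension `d - 1`. Pascal's rule closes the induction.
-/

open Set Module

theorem Nat.sum_range_choose_succ (n d : ℕ) :
    ∑ i ∈ Finset.range (d + 1), (n + 1).choose i =
      ∑ i ∈ Finset.range (d + 1), n.choose i + ∑ i ∈ Finset.range d, n.choose i := by
  induction d with
  | zero => simp
  | succ d ih =>
    rw [Finset.sum_range_succ, ih, Finset.sum_range_succ _ (d + 1), Finset.sum_range_succ _ d,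
      Nat.choose_succ_succ]
    ring

theorem Set.ncard_le_ncard_snoc_or_add_ncard_snoc_and {n : ℕ} (T : Set (Fin (n + 1) → Bool)) :
    T.ncard ≤ {r | Fin.snoc r true ∈ T ∨ Fin.snoc r false ∈ T}.ncard +
      {r | Fin.snoc r true ∈ T ∧ Fin.snoc r false ∈ T}.ncard := by
  set T₁ := {r | Fin.snoc (α := fun _ => Bool) r true ∈ T}
  set T₀ := {r | Fin.snoc (α := fun _ => Bool) r false ∈ T}
  have hT : T ⊆ (Fin.snoc · true) '' T₁ ∪ (Fin.snoc · false) '' T₀ := by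
    intro s hs
    obtain ⟨r, β, rfl⟩ : ∃ r β, s = Fin.snoc r β := ⟨_, _, (Fin.snoc_init_self s).symm⟩
    cases β
    exacts [Or.inr ⟨r, hs, rfl⟩, Or.inl ⟨r, hs, rfl⟩]
  calc T.ncard ≤ ((Fin.snoc · true) '' T₁ ∪ (Fin.snoc · false) '' T₀).ncard := ncard_le_ncard hT
    _ ≤ T₁.ncard + T₀.ncard :=
      (ncard_union_le _ _).trans (add_le_add (ncard_image_le) (ncard_image_le))
    _ = (T₁ ∪ T₀).ncard + (T₁ ∩ T₀).ncard := (ncard_union_add_ncard_inter _ _).symm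

section Arrangement

variable {E ι : Type*} [AddCommGroup E] [Module ℝ E]

def arrangementComplement (g : ι → E →ᵃ[ℝ] ℝ) : Set E := {x | ∀ k, g k x ≠ 0}

noncomputable def signVector (g : ι → E →ᵃ[ℝ] ℝ) (x : E) : ι → Bool := fun k => decide (0 < g k x)

def signCell (g : ι → E →ᵃ[ℝ] ℝ) (s : ι → Bool) : Set E :=
  ⋂ k, g k ⁻¹' cond (s k) (Ioi 0) (Iio 0)

def signVectorsOn (g : ι → E →ᵃ[ℝ] ℝ) (A : Set E) : Set (ι → Bool) :=
  {s | (A ∩ signCell g s).Nonempty}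

theorem mem_cond_Ioi_Iio_iff {t : ℝ} {β : Bool} :
    t ∈ cond β (Ioi 0) (Iio 0) ↔ t ≠ 0 ∧ decide (0 < t) = β := by
  cases β <;> simp only [cond_false, cond_true, mem_Iio, mem_Ioi, decide_eq_true_eq,
    decide_eq_false_iff_not] <;> grind

variable (g : ι → E →ᵃ[ℝ] ℝ)

theorem mem_signCell_iff {s : ι → Bool} {x : E} :
    x ∈ signCell g s ↔ x ∈ arrangementComplement g ∧ signVector g x = s := by
  simp only [signCell, mem_iInter, mem_preimage, mem_cond_Ioi_Iio_iff, forall_and, funext_iff]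
  rfl

theorem convex_signCell (s : ι → Bool) : Convex ℝ (signCell g s) :=
  convex_iInter fun k => by cases s k <;> [exact (convex_Iio 0).affine_preimage (g k);
    exact (convex_Ioi 0).affine_preimage (g k)]

theorem mem_signCell_signVector {x : E} (hx : x ∈ arrangementComplement g) :
    x ∈ signCell g (signVector g x) :=
  (mem_signCell_iff g).2 ⟨hx, rfl⟩

theorem signVector_mem_signVectorsOn {A : Set E} {x : E} (hxA : x ∈ A)
    (hx : x ∈ arrangementComplement g) : signVector g x ∈ signVectorsOn g A :=
  ⟨x, hxA, mem_signCell_signVector g hx⟩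

theorem signVector_ne_of_pos_of_neg {x y : E} {k : ι} (hx : 0 < g k x) (hy : g k y < 0) :
    signVector g x ≠ signVector g y := fun h => by
  simpa [signVector, hx, hy.not_gt] using congrFun h k

theorem signCell_injOn : InjOn (signCell g) {s | (signCell g s).Nonempty} := by
  rintro s ⟨x, hx⟩ s' - h
  exact ((mem_signCell_iff g).1 hx).2.symm.trans ((mem_signCell_iff g).1 (h ▸ hx)).2

theorem mem_signCell_snoc {n : ℕ} {g : Fin (n + 1) → E →ᵃ[ℝ] ℝ} {r : Fin n → Bool} {β : Bool}
    {x : E} : x ∈ signCell g (Fin.snoc r β) ↔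
      x ∈ signCell (g ∘ Fin.castSucc) r ∧ g (Fin.last n) x ∈ cond β (Ioi 0) (Iio 0) := by
  simp only [signCell, mem_iInter, mem_preimage, Fin.forall_fin_succ', Fin.snoc_castSucc,
    Fin.snoc_last, Function.comp_apply]

theorem exists_mem_segment_eq_zero (f : E →ᵃ[ℝ] ℝ) {p q : E} (hp : 0 ≤ f p) (hq : f q ≤ 0) :
    ∃ x ∈ segment ℝ p q, f x = 0 := by
  have : (0 : ℝ) ∈ f '' segment ℝ p q := by
    rw [image_segment, segment_eq_uIcc]
    exact mem_uIcc.2 (Or.inr ⟨hq, hp⟩)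
  exact this

theorem finrank_direction_inf_mk'_ker_lt [FiniteDimensional ℝ E] {A : AffineSubspace ℝ E}
    (f : E →ᵃ[ℝ] ℝ) {p q x₀ : E} (hp : p ∈ A) (hq : q ∈ A) (hpq : f p ≠ f q) (hx₀ : x₀ ∈ A) :
    finrank ℝ (A ⊓ AffineSubspace.mk' x₀ (LinearMap.ker f.linear)).direction <
      finrank ℝ A.direction := by
  rw [AffineSubspace.direction_inf_of_mem hx₀ (AffineSubspace.self_mem_mk' x₀ _),
    AffineSubspace.direction_mk']
  refine Submodule.finrank_lt_finrank_of_lt (inf_lt_left.2 fun h => hpq ?_)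
  have := h (AffineSubspace.vsub_mem_direction hp hq)
  rwa [LinearMap.mem_ker, AffineMap.linearMap_vsub, vsub_eq_sub, sub_eq_zero] at this

theorem mem_signVectorsOn_inf_of_snoc_mem {n : ℕ} {g : Fin (n + 1) → E →ᵃ[ℝ] ℝ}
    {A : AffineSubspace ℝ E} {r : Fin n → Bool}
    (htrue : Fin.snoc r true ∈ signVectorsOn g A) (hfalse : Fin.snoc r false ∈ signVectorsOn g A)
    {x₀ : E} (hx₀ : g (Fin.last n) x₀ = 0) :
    r ∈ signVectorsOn (g ∘ Fin.castSucc)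
      (A ⊓ AffineSubspace.mk' x₀ (LinearMap.ker (g (Fin.last n)).linear) : AffineSubspace ℝ E) := by
  obtain ⟨p, hpA, hp⟩ := htrue
  obtain ⟨q, hqA, hq⟩ := hfalse
  rw [mem_signCell_snoc] at hp hq
  obtain ⟨x, hx, hx0⟩ := exists_mem_segment_eq_zero (g (Fin.last n)) hp.2.le hq.2.le
  refine ⟨x, ⟨A.convex.segment_subset hpA hqA hx, ?_⟩,
    (convex_signCell _ r).segment_subset hp.1 hq.1 hx⟩
  rw [SetLike.mem_coe, AffineSubspace.mem_mk', LinearMap.mem_ker, AffineMap.linearMap_vsub, hx0,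
    hx₀, vsub_self]

theorem ncard_signVectorsOn_le [FiniteDimensional ℝ E] {n : ℕ} (g : Fin n → E →ᵃ[ℝ] ℝ)
    (A : AffineSubspace ℝ E) {d : ℕ} (hA : finrank ℝ A.direction ≤ d) :
    (signVectorsOn g A).ncard ≤ ∑ i ∈ Finset.range (d + 1), n.choose i := by
  induction n generalizing A d with
  | zero => exact (ncard_le_one_of_subsingleton _).trans (by rw [Finset.sum_range_succ']; simp)
  | succ n ih =>
    set T := signVectorsOn g A
    have hsingle : {r | Fin.snoc r true ∈ T ∨ Fin.snoc r false ∈ T} ⊆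
        signVectorsOn (g ∘ Fin.castSucc) A := by
      rintro r (⟨x, hxA, hx⟩ | ⟨x, hxA, hx⟩) <;> exact ⟨x, hxA, (mem_signCell_snoc.1 hx).1⟩
    have hdouble : {r | Fin.snoc r true ∈ T ∧ Fin.snoc r false ∈ T}.ncard ≤
        ∑ i ∈ Finset.range d, n.choose i := by
      rcases eq_empty_or_nonempty {r | Fin.snoc r true ∈ T ∧ Fin.snoc r false ∈ T} with
        hD | ⟨r, ⟨p, hpA, hp⟩, ⟨q, hqA, hq⟩⟩
      · simp [hD]
      rw [mem_signCell_snoc] at hp hq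
      obtain ⟨x₀, hx₀seg, hx₀zero⟩ :=
        exists_mem_segment_eq_zero (g (Fin.last n)) hp.2.le hq.2.le
      have hlt := finrank_direction_inf_mk'_ker_lt (g (Fin.last n)) hpA hqA
        (ne_of_gt (lt_trans hq.2 hp.2)) (A.convex.segment_subset hpA hqA hx₀seg)
      obtain ⟨e, rfl⟩ : ∃ e, d = e + 1 := ⟨d - 1, by omega⟩
      exact (ncard_le_ncard fun r' hr' =>
        mem_signVectorsOn_inf_of_snoc_mem hr'.1 hr'.2 hx₀zero).trans
        (ih _ _ (by omega))
    calc T.ncard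
        ≤ {r | Fin.snoc r true ∈ T ∨ Fin.snoc r false ∈ T}.ncard +
          {r | Fin.snoc r true ∈ T ∧ Fin.snoc r false ∈ T}.ncard :=
          T.ncard_le_ncard_snoc_or_add_ncard_snoc_and
      _ ≤ ∑ i ∈ Finset.range (d + 1), n.choose i + ∑ i ∈ Finset.range d, n.choose i :=
          add_le_add ((ncard_le_ncard hsingle).trans (ih _ _ hA)) hdouble
      _ = ∑ i ∈ Finset.range (d + 1), (n + 1).choose i :=
          (Nat.sum_range_choose_succ n d).symm

end Arrangement

section Topology

variable {E ι : Type*} [NormedAddCommGroup E] [NormedSpace ℝ E] [FiniteDimensional ℝ E]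
  (g : ι → E →ᵃ[ℝ] ℝ)

theorem IsPreconnected.signVector_eq {P : Set E} (hP : IsPreconnected P)
    (hPS : P ⊆ arrangementComplement g) {x y : E} (hx : x ∈ P) (hy : y ∈ P) :
    signVector g x = signVector g y := by
  funext k
  have hcont : Continuous (g k) :=
    AffineMap.continuous_linear_iff.1 (g k).linear.continuous_of_finiteDimensional
  suffices ∀ x ∈ P, ∀ y ∈ P, 0 < g k x → 0 < g k y from
    decide_eq_decide.2 ⟨this x hx y hy, this y hy x hx⟩
  intro x hx y hy hxpos
  by_contra! hyneg
  obtain ⟨z, hz, hz0⟩ := hP.intermediate_value hy hx hcont.continuousOn ⟨hyneg, hxpos.le⟩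
  exact hPS hz k hz0

theorem connectedComponentIn_arrangementComplement {x : E} (hx : x ∈ arrangementComplement g) :
    connectedComponentIn (arrangementComplement g) x = signCell g (signVector g x) := by
  refine Subset.antisymm (fun y hy => (mem_signCell_iff g).2 ⟨connectedComponentIn_subset _ _ hy,
    isPreconnected_connectedComponentIn.signVector_eq g (connectedComponentIn_subset _ _) hy
      (mem_connectedComponentIn hx)⟩) ?_
  exact (convex_signCell g _).isPreconnected.subset_connectedComponentIn
    (mem_signCell_signVector g hx) fun y hy => ((mem_signCell_iff g).1 hy).1

theorem ncard_connectedComponentIn_arrangementComplement :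
    {C | ∃ x ∈ arrangementComplement g, C = connectedComponentIn (arrangementComplement g) x}.ncard
      = (signVectorsOn g univ).ncard := by
  have : {C | ∃ x ∈ arrangementComplement g, C = connectedComponentIn (arrangementComplement g) x}
      = signCell g '' signVectorsOn g univ := by
    ext C
    constructor
    · rintro ⟨x, hx, rfl⟩
      exact ⟨signVector g x, signVector_mem_signVectorsOn g (mem_univ x) hx,
        (connectedComponentIn_arrangementComplement g hx).symm⟩
    · rintro ⟨s, ⟨x, -, hx⟩, rfl⟩
      obtain ⟨hxS, rfl⟩ := (mem_signCell_iff g).1 hx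
      exact ⟨x, hxS, (connectedComponentIn_arrangementComplement g hxS).symm⟩
  rw [this]
  exact ((signCell_injOn g).mono fun _ hs => Set.Nonempty.mono inter_subset_right hs).ncard_image

theorem dense_arrangementComplement [Countable ι] (hg : ∀ k, (g k).linear ≠ 0) :
    Dense (arrangementComplement g) := by
  have : arrangementComplement g = ⋂ k, g k ⁻¹' {0}ᶜ := by
    ext x
    simp [arrangementComplement]
  rw [this]
  refine dense_iInter_of_isOpen (fun k => isOpen_compl_singleton.preimage ?_) fun k =>
    (dense_compl_singleton 0).preimage (AffineMap.isOpenMap_linear_iff.1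
      ((g k).linear.isOpenMap_of_finiteDimensional (LinearMap.surjective (hg k))))
  exact AffineMap.continuous_linear_iff.1 (g k).linear.continuous_of_finiteDimensional

end Topology

/-- If an arrangement of `n` hyperplanes in `ℝ^m` separates a packing of `N` unit balls
(any two balls are separated by at least one hyperplane), then the number of balls is at
most the number of regions of the arrangement, and hence at most `∑_{i=0}^{m} C(n,i)`. -/
theorem separable_packing_card_le_regions (m n N : ℕ)
    (a : Fin n → EuclideanSpace ℝ (Fin m)) (b : Fin n → ℝ) (ha : ∀ k, a k ≠ 0)
    (c : Fin N → EuclideanSpace ℝ (Fin m))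
    (hsep : ∀ i j : Fin N, i ≠ j → ∃ k,
      (Metric.closedBall (c i) 1 ⊆ {x : EuclideanSpace ℝ (Fin m) | b k < ∑ l, a k l * x l} ∧
       Metric.closedBall (c j) 1 ⊆ {x : EuclideanSpace ℝ (Fin m) | ∑ l, a k l * x l < b k}) ∨
      (Metric.closedBall (c i) 1 ⊆ {x : EuclideanSpace ℝ (Fin m) | ∑ l, a k l * x l < b k} ∧
       Metric.closedBall (c j) 1 ⊆ {x : EuclideanSpace ℝ (Fin m) | b k < ∑ l, a k l * x l})) :
    N ≤ {C : Set (EuclideanSpace ℝ (Fin m)) |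
          ∃ x ∈ {x : EuclideanSpace ℝ (Fin m) | ∀ k, ∑ l, a k l * x l ≠ b k},
            C = connectedComponentIn
              {x : EuclideanSpace ℝ (Fin m) | ∀ k, ∑ l, a k l * x l ≠ b k} x}.ncard ∧
    N ≤ ∑ i ∈ Finset.range (m + 1), n.choose i := by
  set g : Fin n → EuclideanSpace ℝ (Fin m) →ᵃ[ℝ] ℝ := fun k =>
    (innerₛₗ ℝ (a k)).toAffineMap - AffineMap.const ℝ _ (b k)
  have hg : ∀ k x, g k x = ∑ l, a k l * x l - b k := fun k x => by
    simp [g, PiLp.inner_apply, mul_comm]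
  have hS : {x : EuclideanSpace ℝ (Fin m) | ∀ k, ∑ l, a k l * x l ≠ b k} =
      arrangementComplement g := by
    ext x
    simp [arrangementComplement, hg, sub_eq_zero]
  have hdense := dense_arrangementComplement g fun k h => ha k (by
    simpa [g] using congrArg (· (a k)) h)
  choose x hxS hxball using fun i =>
    hdense.exists_mem_open Metric.isOpen_ball ⟨c i, Metric.mem_ball_self one_pos⟩
  have hsign : ∀ i j, i ≠ j → signVector g (x i) ≠ signVector g (x j) := by
    intro i j hij
    have hi := Metric.ball_subset_closedBall (hxball i)
    have hj := Metric.ball_subset_closedBall (hxball j)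
    obtain ⟨k, ⟨hik, hjk⟩ | ⟨hik, hjk⟩⟩ := hsep i j hij
    · exact signVector_ne_of_pos_of_neg g (by simpa [hg] using hik hi) (by simpa [hg] using hjk hj)
    · exact (signVector_ne_of_pos_of_neg g (by simpa [hg] using hjk hj)
        (by simpa [hg] using hik hi)).symm
  have hN : N ≤ (signVectorsOn g univ).ncard := by
    simpa using ncard_le_ncard_of_injOn (s := univ) _
      (fun i _ => signVector_mem_signVectorsOn g (mem_univ _) (hxS i))
      (fun i _ j _ h => by_contra fun hne => hsign i j hne h) (toFinite _)
  rw [hS, ncard_connectedComponentIn_arrangementComplement]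
  refine ⟨hN, hN.trans ?_⟩
  simpa using ncard_signVectorsOn_le g ⊤ (d := m)
    (by rw [AffineSubspace.direction_top, finrank_top, finrank_euclideanSpace_fin])
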